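/- Let M be a real symmetric n×n matrix with spectral decomposition M = Σ_{k=1}^n μ_k u_k u_kᵀ, where μ_1 ≥ μ_2 ≥ … ≥ μ_n are its eigenvalues and u_1, …, u_n an orthonormal basis of eigenvectors. Fix L̂ ∈ ℕ and let ρ := min(L̂, number of strictly positive eigenvalues of M). Then the matrix P_{L̂}(M) := Σ_{k=1}^{ρ} μ_k u_k u_kᵀ satisfies ‖M − P_{L̂}(M)‖_F ≤ ‖M − N‖_F for every real symmetric positive semidefinite n×n matrix N with rank(N) ≤ L̂; that is, the truncated eigendecomposition is a Frobenius-norm projection of M onto the set of positive semidefinite matrices of rank at most L̂. -/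

import Mathlib

/-
Write `N = ∑ⱼ λⱼ vⱼ vⱼᵀ` with `λⱼ ≥ 0`, at most `L̂` of them nonzero, and put `cₖⱼ = ⟨uₖ, vⱼ⟩²`,
a doubly stochastic matrix. Then `‖M - N‖² = ∑ μₖ² - 2 ∑ₖⱼ μₖ λⱼ cₖⱼ + ∑ λⱼ²` and
`‖M - P(M)‖² = ∑ μₖ² - ∑_{k < ρ} μₖ²`. With `qⱼ = ∑ₖ cₖⱼ μₖ`, each term with `λⱼ ≠ 0` satisfies
`2 λⱼ qⱼ - λⱼ² ≤ (qⱼ⁺)² ≤ ∑ₖ cₖⱼ (μₖ⁺)²` (Jensen). Summing over those `j` weights `(μₖ⁺)²` by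
`tₖ ∈ [0, 1]` with `∑ tₖ ≤ L̂`, and such a sum is at most the sum of the `L̂` largest `(μₖ⁺)²`,
which is `∑_{k < ρ} μₖ²`.
-/

open MeasureTheory Finset
open scoped ENNReal

noncomputable section

/-- A labeled data point z = (x, y) ∈ ℝ^d × ℝ^L. -/
abbrev Pt (d L : ℕ) := (Fin d → ℝ) × (Fin L → ℝ)

/-- Inner product ⟨y, y'⟩ of label vectors. -/
def ipY {L : ℕ} (y y' : Fin L → ℝ) : ℝ := ∑ i, y i * y' i

/-- Bilinear form xᵀ A x'. -/
def qForm {d : ℕ} (A : Matrix (Fin d) (Fin d) ℝ) (x x' : Fin d → ℝ) : ℝ :=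
  ∑ i, ∑ j, x i * A i j * x' j

/-- Euclidean norm ‖x‖₂. -/
def norm2 {d : ℕ} (x : Fin d → ℝ) : ℝ := Real.sqrt (∑ i, x i ^ 2)

/-- Frobenius norm ‖A‖_F. -/
def frobNorm {d : ℕ} (A : Matrix (Fin d) (Fin d) ℝ) : ℝ :=
  Real.sqrt (∑ i, ∑ j, (A i j) ^ 2)

/-- Loss ℓ(A; z, z') := g(⟨y, y'⟩)·(⟨y, y'⟩ − xᵀ A x')² + λ·Tr(A). -/
def lossFn {d L : ℕ} (g : ℝ → ℝ) (lam : ℝ) (A : Matrix (Fin d) (Fin d) ℝ)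
    (z z' : Pt d L) : ℝ :=
  g (ipY z.2 z'.2) * (ipY z.2 z'.2 - qForm A z.1 z'.1) ^ 2 + lam * A.trace

/-- Empirical risk L̂(A; D) := (1/(n(n−1))) Σᵢ Σ_{j≠i} ℓ(A; zᵢ, zⱼ). -/
def empRisk {d L : ℕ} (g : ℝ → ℝ) (lam : ℝ) {n : ℕ} (A : Matrix (Fin d) (Fin d) ℝ)
    (D : Fin n → Pt d L) : ℝ :=
  (1 / ((n : ℝ) * ((n : ℝ) - 1))) * ∑ i, ∑ j ∈ univ.erase i, lossFn g lam A (D i) (D j)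

/-- Population risk L(A) := E_{z,z' i.i.d. ∼ P}[ℓ(A; z, z')]. -/
def popRisk {d L : ℕ} (g : ℝ → ℝ) (lam : ℝ) (P : Measure (Pt d L))
    (A : Matrix (Fin d) (Fin d) ℝ) : ℝ :=
  ∫ z, (∫ z', lossFn g lam A z z' ∂P) ∂P

/-- Risk relative to the training set, L̃(A; D) := (1/n) Σₖ E_{z∼P}[ℓ(A; z, zₖ)]. -/
def tilRisk {d L : ℕ} (g : ℝ → ℝ) (lam : ℝ) (P : Measure (Pt d L)) {n : ℕ}
    (A : Matrix (Fin d) (Fin d) ℝ) (D : Fin n → Pt d L) : ℝ :=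
  (1 / (n : ℝ)) * ∑ k, ∫ z, lossFn g lam A z (D k) ∂P

/-- Law of a Rademacher random variable: uniform on {−1, +1}. -/
def radMeasure : Measure ℝ :=
  (2⁻¹ : ℝ≥0∞) • Measure.dirac (-1) + (2⁻¹ : ℝ≥0∞) • Measure.dirac 1

section SpectralSum

open Matrix

variable {ι κ m : Type*} [Fintype ι] [Fintype κ]

def spectralSum (α : ι → ℝ) (u : ι → m → ℝ) : Matrix m m ℝ :=
  ∑ k, α k • vecMulVec (u k) (u k)

lemma spectralSum_apply (α : ι → ℝ) (u : ι → m → ℝ) (a b : m) :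
    spectralSum α u a b = ∑ k, α k * (u k a * u k b) := by
  simp [spectralSum, Matrix.sum_apply, vecMulVec_apply]

lemma isSymm_spectralSum (α : ι → ℝ) (u : ι → m → ℝ) : (spectralSum α u).IsSymm := by
  simp [IsSymm, spectralSum, transpose_sum, transpose_smul, transpose_vecMulVec]

lemma trace_spectralSum_mul_spectralSum [Fintype m] (α : ι → ℝ) (β : κ → ℝ)
    (u : ι → m → ℝ) (v : κ → m → ℝ) :
    trace (spectralSum α u * spectralSum β v) = ∑ k, ∑ j, α k * β j * (u k ⬝ᵥ v j) ^ 2 := by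
  simp [spectralSum, sum_mul_sum, trace_sum, vecMulVec_mul_vecMulVec, trace_vecMulVec, smul_smul,
    sq, mul_assoc, mul_left_comm]

end SpectralSum

section OrthonormalRows

open Matrix

variable {ι : Type*} [Fintype ι] [DecidableEq ι]

def OrthonormalRows (u : ι → ι → ℝ) : Prop :=
  ∀ k l, u k ⬝ᵥ u l = if k = l then 1 else 0

namespace OrthonormalRows

variable {u : ι → ι → ℝ}

lemma transpose_mul (hu : OrthonormalRows u) : (of u)ᵀ * of u = 1 := by
  refine mul_eq_one_comm.mp ?_
  ext k l
  simpa [mul_apply, one_apply, dotProduct] using hu k l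

lemma sum_sq_dotProduct (hu : OrthonormalRows u) (x : ι → ℝ) :
    ∑ k, (u k ⬝ᵥ x) ^ 2 = x ⬝ᵥ x := by
  have h : ∑ k, (u k ⬝ᵥ x) ^ 2 = (of u *ᵥ x) ⬝ᵥ (of u *ᵥ x) := by
    simp [dotProduct, mulVec, sq]
  rw [h, dotProduct_mulVec, vecMul_mulVec, hu.transpose_mul, vecMul_one]

lemma trace_spectralSum_mul_self (hu : OrthonormalRows u) (α : ι → ℝ) :
    trace (spectralSum α u * spectralSum α u) = ∑ k, α k ^ 2 := by
  rw [trace_spectralSum_mul_spectralSum]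
  refine sum_congr rfl fun k _ => ?_
  simp [hu k, sq]

lemma trace_sq_spectralSum_sub (hu : OrthonormalRows u) {v : ι → ι → ℝ}
    (hv : OrthonormalRows v) (α β : ι → ℝ) :
    trace ((spectralSum α u - spectralSum β v) * (spectralSum α u - spectralSum β v))
      = ∑ k, α k ^ 2 - 2 * ∑ k, ∑ j, α k * β j * (u k ⬝ᵥ v j) ^ 2 + ∑ j, β j ^ 2 := by
  rw [sub_mul, mul_sub, mul_sub, trace_sub, trace_sub, trace_sub, trace_mul_comm (spectralSum β v),
    hu.trace_spectralSum_mul_self, hv.trace_spectralSum_mul_self,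
    trace_spectralSum_mul_spectralSum]
  ring

end OrthonormalRows

end OrthonormalRows

namespace Matrix.IsHermitian

variable {ι : Type*} [Fintype ι] [DecidableEq ι] {N : Matrix ι ι ℝ}

lemma orthonormalRows_eigenvectorBasis (hN : N.IsHermitian) :
    OrthonormalRows fun j => ⇑(hN.eigenvectorBasis j) := by
  intro j l
  simpa [dotProduct, PiLp.inner_apply, mul_comm] using
    orthonormal_iff_ite.mp hN.eigenvectorBasis.orthonormal j l

lemma eq_spectralSum (hN : N.IsHermitian) :
    N = spectralSum hN.eigenvalues fun j => ⇑(hN.eigenvectorBasis j) := by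
  ext a b
  conv_lhs => rw [hN.spectral_theorem]
  simp only [RCLike.ofReal_real_eq_id, CompTriple.comp_eq, Unitary.conjStarAlgAut_apply, mul_apply,
    eigenvectorUnitary_apply, diagonal_apply, mul_ite, mul_zero, sum_ite_eq', mem_univ, ↓reduceIte,
    star_apply, star_trivial, spectralSum_apply]
  exact sum_congr rfl fun _ _ => by ring

end Matrix.IsHermitian

lemma two_mul_mul_sub_sq_le_sq_max {l q : ℝ} (hl : 0 ≤ l) : 2 * (l * q) - l ^ 2 ≤ max q 0 ^ 2 := by
  rcases le_total q 0 with hq | hq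
  · rw [max_eq_right hq]
    nlinarith [mul_nonneg hl (neg_nonneg.mpr hq)]
  · rw [max_eq_left hq]
    nlinarith [sq_nonneg (l - q)]

lemma sq_max_sum_mul_le_sum_mul_sq_max {ι : Type*} [Fintype ι] {c x : ι → ℝ}
    (hc : ∀ k, 0 ≤ c k) (hc1 : ∑ k, c k = 1) :
    max (∑ k, c k * x k) 0 ^ 2 ≤ ∑ k, c k * max (x k) 0 ^ 2 := by
  have hmax : max (∑ k, c k * x k) 0 ≤ ∑ k, c k * max (x k) 0 :=
    max_le (sum_le_sum fun k _ => mul_le_mul_of_nonneg_left (le_max_left _ _) (hc k))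
      (sum_nonneg fun k _ => mul_nonneg (hc k) (le_max_right _ _))
  -- Jensen's inequality for `x ↦ x ^ 2`, as weighted Cauchy–Schwarz
  have hcs : (∑ k, c k * max (x k) 0) ^ 2 ≤ (∑ k, c k) * ∑ k, c k * max (x k) 0 ^ 2 :=
    sum_sq_le_sum_mul_sum_of_sq_le_mul univ (fun k _ => hc k)
      (fun k _ => mul_nonneg (hc k) (sq_nonneg _)) (fun k _ => by ring_nf; rfl)
  rw [hc1, one_mul] at hcs
  exact (pow_le_pow_left₀ (le_max_right _ _) hmax 2).trans hcs

lemma sum_mul_le_sum_filter_lt_of_antitone {n L : ℕ} {w t : Fin n → ℝ} (hw : Antitone w)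
    (hw0 : ∀ k, 0 ≤ w k) (ht0 : ∀ k, 0 ≤ t k) (ht1 : ∀ k, t k ≤ 1) (htL : ∑ k, t k ≤ L) :
    ∑ k, t k * w k ≤ ∑ k ∈ univ.filter (fun k : Fin n => (k : ℕ) < L), w k := by
  rcases le_or_gt n L with hnL | hLn
  · rw [filter_true_of_mem fun k _ => k.is_lt.trans_le hnL]
    exact sum_le_sum fun k _ => mul_le_of_le_one_left (hw0 k) (ht1 k)
  · -- the `L`-th weight `θ` separates the `L` largest weights from the others
    set θ := w ⟨L, hLn⟩
    have key : ∀ k : Fin n, t k * w k ≤ θ * t k + if (k : ℕ) < L then w k - θ else 0 := by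
      intro k
      split_ifs with hk
      · nlinarith [hw (Fin.le_def.mpr hk.le : k ≤ ⟨L, hLn⟩), ht1 k]
      · nlinarith [hw (Fin.le_def.mpr (not_lt.mp hk) : (⟨L, hLn⟩ : Fin n) ≤ k), ht0 k]
    calc ∑ k, t k * w k ≤ ∑ k, (θ * t k + if (k : ℕ) < L then w k - θ else 0) :=
          sum_le_sum fun k _ => key k
      _ = θ * ∑ k, t k + ∑ k ∈ univ.filter (fun k : Fin n => (k : ℕ) < L), (w k - θ) := by
          rw [sum_add_distrib, ← mul_sum, sum_ite, sum_const_zero, add_zero]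
      _ ≤ θ * L + ∑ k ∈ univ.filter (fun k : Fin n => (k : ℕ) < L), (w k - θ) := by
          gcongr
          exact hw0 _
      _ = ∑ k ∈ univ.filter (fun k : Fin n => (k : ℕ) < L), w k := by
          rw [sum_sub_distrib, sum_const, Fin.card_filter_val_lt, min_eq_right hLn.le, nsmul_eq_mul]
          ring

theorem two_mul_sum_sub_sum_sq_le_sum_filter_lt {n L : ℕ} {μ lam : Fin n → ℝ}
    {c : Fin n → Fin n → ℝ} (hμ : Antitone μ) (hlam : ∀ j, 0 ≤ lam j)
    (hL : #{j | lam j ≠ 0} ≤ L) (hc : ∀ k j, 0 ≤ c k j) (hrow : ∀ k, ∑ j, c k j = 1)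
    (hcol : ∀ j, ∑ k, c k j = 1) :
    2 * ∑ k, ∑ j, μ k * lam j * c k j - ∑ j, lam j ^ 2
      ≤ ∑ k ∈ univ.filter (fun k : Fin n => (k : ℕ) < L), max (μ k) 0 ^ 2 := by
  set T : Finset (Fin n) := {j | lam j ≠ 0}
  set t : Fin n → ℝ := fun k => ∑ j ∈ T, c k j
  have ht0 : ∀ k, 0 ≤ t k := fun k => sum_nonneg fun j _ => hc k j
  have ht1 : ∀ k, t k ≤ 1 := fun k =>
    (sum_le_sum_of_subset_of_nonneg (filter_subset _ _) fun j _ _ => hc k j).trans_eq (hrow k)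
  have htL : ∑ k, t k ≤ L := by
    rw [sum_comm, sum_congr rfl fun j _ => hcol j, sum_const, nsmul_one]
    exact_mod_cast hL
  have hm : Antitone fun k => max (μ k) 0 ^ 2 := fun k l hkl =>
    pow_le_pow_left₀ (le_max_right _ _) (max_le_max (hμ hkl) le_rfl) 2
  calc 2 * ∑ k, ∑ j, μ k * lam j * c k j - ∑ j, lam j ^ 2
      = ∑ j, (2 * (lam j * ∑ k, c k j * μ k) - lam j ^ 2) := by
        simp only [sum_sub_distrib, mul_sum]
        rw [sum_comm]
        exact congrArg (· - _) (sum_congr rfl fun j _ => sum_congr rfl fun k _ => by ring)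
    _ = ∑ j ∈ T, (2 * (lam j * ∑ k, c k j * μ k) - lam j ^ 2) :=
        (sum_filter_of_ne (p := fun j => lam j ≠ 0) fun j _ hj hlj => hj (by rw [hlj]; ring)).symm
    _ ≤ ∑ j ∈ T, max (∑ k, c k j * μ k) 0 ^ 2 :=
        sum_le_sum fun j _ => two_mul_mul_sub_sq_le_sq_max (hlam j)
    _ ≤ ∑ j ∈ T, ∑ k, c k j * max (μ k) 0 ^ 2 :=
        sum_le_sum fun j _ => sq_max_sum_mul_le_sum_mul_sq_max (fun k => hc k j) (hcol j)
    _ = ∑ k, t k * max (μ k) 0 ^ 2 := by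
        rw [sum_comm]
        simp only [t, sum_mul]
    _ ≤ ∑ k ∈ univ.filter (fun k : Fin n => (k : ℕ) < L), max (μ k) 0 ^ 2 :=
        sum_mul_le_sum_filter_lt_of_antitone hm (fun k => sq_nonneg _) ht0 ht1 htL

lemma Antitone.sum_filter_lt_sq_max {n : ℕ} {μ : Fin n → ℝ} (hμ : Antitone μ) (L : ℕ) :
    ∑ k ∈ univ.filter (fun k : Fin n => (k : ℕ) < L), max (μ k) 0 ^ 2
      = ∑ k ∈ univ.filter (fun k : Fin n => (k : ℕ) < min L #{k | 0 < μ k}), μ k ^ 2 := by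
  have hpos (k : Fin n) : (k : ℕ) < #{k | 0 < μ k} ↔ 0 < μ k :=
    Fin.lt_card_filter_univ_iff_apply_of_imp _ fun _ _ hji hi => hi.trans_le (hμ hji)
  rw [show univ.filter (fun k : Fin n => (k : ℕ) < min L #{k | 0 < μ k})
      = (univ.filter fun k : Fin n => (k : ℕ) < L).filter (0 < μ ·) by
    ext k; simp [hpos], sum_filter (0 < μ ·)]
  refine sum_congr rfl fun k _ => ?_
  split_ifs with h
  · rw [max_eq_left h.le]
  · rw [max_eq_right (not_lt.mp h), zero_pow two_ne_zero]

lemma frobNorm_eq_sqrt_trace_mul_self {d : ℕ} {A : Matrix (Fin d) (Fin d) ℝ} (hA : A.IsSymm) :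
    frobNorm A = √(A * A).trace := by
  rw [frobNorm, Matrix.trace]
  congr 1
  refine sum_congr rfl fun a _ => ?_
  simp only [Matrix.diag_apply, Matrix.mul_apply, sq]
  exact sum_congr rfl fun b _ => by rw [hA.apply b a]

theorem stmt17_general {n : ℕ} (M : Matrix (Fin n) (Fin n) ℝ)
    (mu : Fin n → ℝ) (u : Fin n → (Fin n → ℝ))
    (hanti : Antitone mu)
    (horth : ∀ k l : Fin n, (∑ i, u k i * u l i) = if k = l then 1 else 0)
    (hspec : M = ∑ k, mu k • Matrix.vecMulVec (u k) (u k))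
    (Lhat : ℕ)
    (rho : ℕ) (hrho : rho = min Lhat (Finset.univ.filter fun k : Fin n => 0 < mu k).card)
    (PM : Matrix (Fin n) (Fin n) ℝ)
    (hPM : PM = ∑ k ∈ Finset.univ.filter (fun k : Fin n => (k : ℕ) < rho),
      mu k • Matrix.vecMulVec (u k) (u k)) :
    ∀ N : Matrix (Fin n) (Fin n) ℝ, N.PosSemidef → N.rank ≤ Lhat →
      frobNorm (M - PM) ≤ frobNorm (M - N) := by
  intro N hN hrank
  have hu : OrthonormalRows u := horth
  set lam := hN.isHermitian.eigenvalues
  set v := fun j => ⇑(hN.isHermitian.eigenvectorBasis j)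
  have hv : OrthonormalRows v := hN.isHermitian.orthonormalRows_eigenvectorBasis
  set tail : Fin n → ℝ := fun k => if (k : ℕ) < rho then 0 else mu k
  have hMP : M - PM = spectralSum tail u := by
    rw [hspec, hPM, sum_filter, ← sum_sub_distrib]
    exact sum_congr rfl fun k _ => by split_ifs with hk <;> simp [tail, hk]
  have hMN : M - N = spectralSum mu u - spectralSum lam v := by
    rw [hspec, ← hN.isHermitian.eq_spectralSum]; rfl
  have htail : ∑ k, tail k ^ 2 + ∑ k ∈ univ.filter (fun k : Fin n => (k : ℕ) < rho), mu k ^ 2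
      = ∑ k, mu k ^ 2 := by
    rw [sum_filter, ← sum_add_distrib]
    exact sum_congr rfl fun k _ => by split_ifs with hk <;> simp [tail, hk]
  have hrank' : #{j | lam j ≠ 0} ≤ Lhat := by
    rwa [← Fintype.card_subtype, ← hN.isHermitian.rank_eq_card_non_zero_eigs]
  have key := two_mul_sum_sub_sum_sq_le_sum_filter_lt (c := fun k j => (u k ⬝ᵥ v j) ^ 2) hanti
    hN.eigenvalues_nonneg hrank' (fun _ _ => sq_nonneg _)
    (fun k => by simp_rw [dotProduct_comm (u k)]; rw [hv.sum_sq_dotProduct, hu k k, if_pos rfl])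
    (fun j => by rw [hu.sum_sq_dotProduct, hv j j, if_pos rfl])
  rw [hanti.sum_filter_lt_sq_max, ← hrho] at key
  rw [frobNorm_eq_sqrt_trace_mul_self (hMP ▸ isSymm_spectralSum _ _),
    frobNorm_eq_sqrt_trace_mul_self (hMN ▸ (isSymm_spectralSum _ _).sub (isSymm_spectralSum _ _)),
    hMP, hMN, hu.trace_spectralSum_mul_self, hu.trace_sq_spectralSum_sub hv]
  exact Real.sqrt_le_sqrt (by linarith)

theorem stmt17 {n : ℕ} (M : Matrix (Fin n) (Fin n) ℝ) (hM : M.IsSymm)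
    (mu : Fin n → ℝ) (u : Fin n → (Fin n → ℝ))
    (hanti : Antitone mu)
    (horth : ∀ k l : Fin n, (∑ i, u k i * u l i) = if k = l then 1 else 0)
    (hspec : M = ∑ k, mu k • Matrix.vecMulVec (u k) (u k))
    (Lhat : ℕ)
    (rho : ℕ) (hrho : rho = min Lhat (Finset.univ.filter fun k : Fin n => 0 < mu k).card)
    (PM : Matrix (Fin n) (Fin n) ℝ)
    (hPM : PM = ∑ k ∈ Finset.univ.filter (fun k : Fin n => (k : ℕ) < rho),
      mu k • Matrix.vecMulVec (u k) (u k)) :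
    ∀ N : Matrix (Fin n) (Fin n) ℝ, N.PosSemidef → N.rank ≤ Lhat →
      frobNorm (M - PM) ≤ frobNorm (M - N) :=
  stmt17_general M mu u hanti horth hspec Lhat rho hrho PM hPM

end
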